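/- For m ≥ 3, the sequence (√((m−2)/(m−1)) e₁ + √(1/(m−1)) eₙ)_{n≥2} in ℓ₂ consists of unit vectors, does not converge weakly to 0, and is a maximizing sequence for the m-homogeneous polynomial P_m(x) = x₁^m + m x₁^{m−2} Σ_{j≥2} (j/(j+1)) x_j², i.e., |P_m| of these vectors converges to ‖P_m‖ = 2((m−2)/(m−1))^{(m−2)/2}. Hence the pair (ℓ₂, ℝ) fails the m-homogeneous polynomial weak maximizing property for m ≥ 3. -/

import Mathlib

/-!
On the unit sphere of `ℓ²` the weights `(i + 2) / (i + 3)` lie in `[0, 1]`, so with `t = |x₀|`,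
`|P_m x| ≤ t ^ m + m t ^ (m - 2) (1 - t²) = m t ^ (m - 2) - (m - 1) t ^ m`. Weighted AM-GM bounds
this one-variable function by `2 r ^ (m - 2)`, where `r² = (m - 2) / (m - 1)`, with equality at
`t = r`. The test vectors have first coordinate `r` and put the remaining mass on coordinates
whose weights tend to `1`, so `|P_m|` along them tends to the bound; the first coordinate also
keeps them away from weak `0`.
-/

open Filter Topology

local notation "ℓ²" => lp (fun _ : ℕ => ℝ) 2

theorem add_two_mul_pow_le (p : ℕ) {v : ℝ} (hv : 0 ≤ v) :
    (p + 2 : ℝ) * v ^ p ≤ p * v ^ (p + 2) + 2 := by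
  have hp : (0 : ℝ) < p + 2 := by positivity
  have amgm := Real.geom_mean_le_arith_mean2_weighted (p₁ := v ^ (p + 2)) (p₂ := 1)
    (w₁ := p / (p + 2)) (w₂ := 2 / (p + 2)) (by positivity) (by positivity) (by positivity)
    zero_le_one (by field_simp)
  have hpow : (v ^ (p + 2)) ^ ((p : ℝ) / (p + 2)) = v ^ p := by
    rw [← Real.rpow_natCast, ← Real.rpow_mul hv, ← Real.rpow_natCast]
    congr 1
    push_cast
    field_simp
  rw [hpow, Real.one_rpow, mul_one] at amgm
  calc (p + 2 : ℝ) * v ^ p ≤ (p + 2) * (p / (p + 2) * v ^ (p + 2) + 2 / (p + 2) * 1) := by gcongr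
    _ = p * v ^ (p + 2) + 2 := by field_simp

theorem add_two_mul_pow_sub_le {p : ℕ} {r t : ℝ} (hr : 0 < r) (hpr : (p + 1) * r ^ 2 = p)
    (ht : 0 ≤ t) : (p + 2) * t ^ p - (p + 1) * t ^ (p + 2) ≤ 2 * r ^ p := by
  have key := add_two_mul_pow_le p (div_nonneg ht hr.le)
  rw [div_pow, div_pow] at key
  calc (p + 2) * t ^ p - (p + 1) * t ^ (p + 2)
      = r ^ p * ((p + 2) * (t ^ p / r ^ p) - p * (t ^ (p + 2) / r ^ (p + 2))) := by
        field_simp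
        linear_combination (-t ^ 2 * t ^ p * r ^ p) * hpr
    _ ≤ r ^ p * 2 := by gcongr; linarith
    _ = 2 * r ^ p := mul_comm _ _

theorem lp.hasSum_sq {ι : Type*} (x : lp (fun _ : ι => ℝ) 2) :
    HasSum (fun i => x i ^ 2) (‖x‖ ^ 2) := by
  have h := lp.hasSum_inner (𝕜 := ℝ) x x
  rw [real_inner_self_eq_norm_sq] at h
  simpa [sq] using h

theorem norm_sq_smul_single_add_smul_single {ι : Type*} [DecidableEq ι] {i j : ι} (hij : i ≠ j)
    (a b : ℝ) :
    ‖(a • lp.single 2 i 1 + b • lp.single 2 j 1 : lp (fun _ : ι => ℝ) 2)‖ ^ 2 = a ^ 2 + b ^ 2 := by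
  rw [norm_add_sq_real, real_inner_smul_left, real_inner_smul_right, lp.inner_single_left,
    lp.single_apply_ne 2 j _ hij, norm_smul, norm_smul, lp.norm_single two_pos,
    lp.norm_single two_pos]
  simp

theorem tsum_sq_succ_eq_norm_sq_sub_sq (x : ℓ²) : ∑' i, x (i + 1) ^ 2 = ‖x‖ ^ 2 - x 0 ^ 2 := by
  rw [← (lp.hasSum_sq x).tsum_eq, (lp.hasSum_sq x).summable.tsum_eq_zero_add]
  ring

theorem tsum_mul_sq_succ_le_norm_sq_sub_sq {w : ℕ → ℝ} (hw0 : ∀ i, 0 ≤ w i) (hw1 : ∀ i, w i ≤ 1)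
    (x : ℓ²) : ∑' i, w i * x (i + 1) ^ 2 ≤ ‖x‖ ^ 2 - x 0 ^ 2 := by
  have hs : Summable fun i => x (i + 1) ^ 2 := (summable_nat_add_iff 1).2 (lp.hasSum_sq x).summable
  have hle : ∀ i, w i * x (i + 1) ^ 2 ≤ x (i + 1) ^ 2 := fun i =>
    mul_le_of_le_one_left (sq_nonneg _) (hw1 i)
  rw [← tsum_sq_succ_eq_norm_sq_sub_sq]
  exact (hs.of_nonneg_of_le (fun i => mul_nonneg (hw0 i) (sq_nonneg _)) hle).tsum_le_tsum hle hs

theorem lp.not_forall_tendsto_zero_of_apply_eq {ι : Type*} [DecidableEq ι]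
    {u : ℕ → lp (fun _ : ι => ℝ) 2} {i : ι} {c : ℝ} (hc : c ≠ 0) (hu : ∀ n, u n i = c) :
    ¬ ∀ f : lp (fun _ : ι => ℝ) 2 →L[ℝ] ℝ, Tendsto (fun n => f (u n)) atTop (𝓝 0) := by
  intro h
  have hlim : Tendsto (fun _ : ℕ => c) atTop (𝓝 0) := by
    simpa [lp.inner_single_left, hu] using h (innerSL ℝ (lp.single 2 i 1))
  exact hc (tendsto_const_nhds_iff.1 hlim)

theorem csSup_eq_of_forall_le_of_tendsto {α : Type*} [ConditionallyCompleteLinearOrder α]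
    [TopologicalSpace α] [OrderTopology α] {S : Set α} {M : α} {f : ℕ → α}
    (hle : ∀ c ∈ S, c ≤ M) (hmem : ∀ n, f n ∈ S) (hf : Tendsto f atTop (𝓝 M)) : sSup S = M :=
  (isLUB_of_mem_closure hle (mem_closure_of_tendsto hf (Eventually.of_forall hmem))).csSup_eq
    ⟨_, hmem 0⟩

/-- The polynomial `P_m` with weights `w`; the coordinate `x (i + 1)` is the paper's `x_{i+2}`,
so the paper's weights `j / (j + 1)` are `w i = (i + 2) / (i + 3)`. -/
noncomputable def weightedPoly (m : ℕ) (w : ℕ → ℝ) (x : ℓ²) : ℝ :=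
  x 0 ^ m + m * x 0 ^ (m - 2) * ∑' i, w i * x (i + 1) ^ 2

theorem abs_weightedPoly_le (p : ℕ) {w : ℕ → ℝ} (hw0 : ∀ i, 0 ≤ w i) (hw1 : ∀ i, w i ≤ 1)
    {x : ℓ²} (hx : ‖x‖ = 1) :
    |weightedPoly (p + 2) w x| ≤ (p + 2) * |x 0| ^ p - (p + 1) * |x 0| ^ (p + 2) := by
  set S := ∑' i, w i * x (i + 1) ^ 2
  have hS0 : 0 ≤ S := tsum_nonneg fun i => mul_nonneg (hw0 i) (sq_nonneg _)
  have hS1 : S ≤ 1 - |x 0| ^ 2 := by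
    simpa [hx, sq_abs] using tsum_mul_sq_succ_le_norm_sq_sub_sq hw0 hw1 x
  calc |weightedPoly (p + 2) w x|
      ≤ |x 0| ^ (p + 2) + (p + 2) * |x 0| ^ p * S := by
        unfold weightedPoly
        refine (abs_add_le _ _).trans_eq ?_
        rw [abs_mul, abs_mul, abs_pow, abs_pow, abs_of_nonneg hS0, Nat.add_sub_cancel]
        push_cast
        rw [abs_of_nonneg (by positivity : (0 : ℝ) ≤ p + 2)]
    _ ≤ |x 0| ^ (p + 2) + (p + 2) * |x 0| ^ p * (1 - |x 0| ^ 2) := by gcongr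
    _ = (p + 2) * |x 0| ^ p - (p + 1) * |x 0| ^ (p + 2) := by ring

theorem smul_single_add_smul_single_apply {ι : Type*} [DecidableEq ι] (i j : ι) (a b : ℝ)
    (k : ι) : (a • lp.single 2 i 1 + b • lp.single 2 j 1 : lp (fun _ : ι => ℝ) 2) k =
      (if k = i then a else 0) + (if k = j then b else 0) := by
  rw [lp.coeFn_add, lp.coeFn_smul, lp.coeFn_smul]
  simp only [Pi.add_apply, Pi.smul_apply, smul_eq_mul, lp.single_apply, Pi.single_apply]
  split_ifs <;> simp

theorem weightedPoly_smul_single_add_smul_single (m : ℕ) (w : ℕ → ℝ) (a b : ℝ) (n : ℕ) :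
    weightedPoly m w (a • lp.single 2 0 1 + b • lp.single 2 (n + 1) 1) =
      a ^ m + m * a ^ (m - 2) * (w n * b ^ 2) := by
  unfold weightedPoly
  rw [tsum_eq_single n]
  · simp [smul_single_add_smul_single_apply]
  · intro i hi
    simp [smul_single_add_smul_single_apply, hi]

theorem tendsto_abs_weightedPoly_smul_single_add_smul_single {p : ℕ} {w : ℕ → ℝ}
    (hw : Tendsto w atTop (𝓝 1)) {r β : ℝ} (hr : 0 ≤ r) (hsum : r ^ 2 + β ^ 2 = 1)
    (hβ2 : (p + 1) * β ^ 2 = 1) :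
    Tendsto (fun n => |weightedPoly (p + 2) w (r • lp.single 2 0 1 + β • lp.single 2 (n + 1) 1)|)
      atTop (𝓝 (2 * r ^ p)) := by
  have hlim : |r ^ (p + 2) + (p + 2) * r ^ p * (1 * β ^ 2)| = 2 * r ^ p := by
    rw [abs_of_nonneg (by positivity)]
    linear_combination r ^ p * hsum + r ^ p * hβ2
  rw [← hlim]
  refine (((hw.mul_const _).const_mul _).const_add _).abs.congr fun n => ?_
  rw [weightedPoly_smul_single_add_smul_single]
  push_cast
  rfl

/-- for `m ≥ 3`, the sequence `√((m−2)/(m−1)) e₁ + √(1/(m−1)) eₙ` (written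
0-indexed, with second index running over `n ≥ 1`) consists of unit vectors, does not
converge weakly to `0`, and is a maximizing sequence for
`P_m(x) = x₁^m + m x₁^{m−2} Σ_{j≥2} (j/(j+1)) x_j²`, whose norm is
`2((m−2)/(m−1))^{(m−2)/2}`. -/
theorem Pm_maximizing_sequence (m : ℕ) (hm : 3 ≤ m)
    (P : lp (fun _ : ℕ => ℝ) 2 → ℝ)
    (hP : ∀ x, P x = ((x : ∀ _ : ℕ, ℝ) 0) ^ m +
      (m : ℝ) * ((x : ∀ _ : ℕ, ℝ) 0) ^ (m - 2) *
        ∑' i : ℕ, (((i : ℝ) + 2) / ((i : ℝ) + 3)) * ((x : ∀ _ : ℕ, ℝ) (i + 1)) ^ 2)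
    (u : ℕ → lp (fun _ : ℕ => ℝ) 2)
    (hu : ∀ n, u n = Real.sqrt (((m : ℝ) - 2) / ((m : ℝ) - 1)) • lp.single 2 0 (1 : ℝ) +
      Real.sqrt (1 / ((m : ℝ) - 1)) • lp.single 2 (n + 1) (1 : ℝ)) :
    (∀ n, ‖u n‖ = 1) ∧
    (¬ ∀ f : lp (fun _ : ℕ => ℝ) 2 →L[ℝ] ℝ, Tendsto (fun n => f (u n)) atTop (𝓝 0)) ∧
    sSup {c : ℝ | ∃ x, ‖x‖ = 1 ∧ c = |P x|} =
      2 * (((m : ℝ) - 2) / ((m : ℝ) - 1)) ^ (((m : ℝ) - 2) / 2) ∧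
    Tendsto (fun n => |P (u n)|) atTop
      (𝓝 (2 * (((m : ℝ) - 2) / ((m : ℝ) - 1)) ^ (((m : ℝ) - 2) / 2))) := by
  obtain ⟨p, rfl⟩ : ∃ p, m = p + 2 := ⟨m - 2, by omega⟩
  have hp : (0 : ℝ) < p := by exact_mod_cast (by omega : 0 < p)
  have hcast : ((p + 2 : ℕ) : ℝ) - 2 = p := by push_cast; ring
  have hcast' : ((p + 2 : ℕ) : ℝ) - 1 = p + 1 := by push_cast; ring
  rw [hcast, hcast'] at hu ⊢
  set r := √(p / (p + 1))
  set β := √(1 / (p + 1))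
  have hr : 0 < r := Real.sqrt_pos.2 (by positivity)
  have hr2 : (p + 1) * r ^ 2 = p := by rw [Real.sq_sqrt (by positivity)]; field_simp
  have hβ2 : (p + 1) * β ^ 2 = 1 := by rw [Real.sq_sqrt (by positivity)]; field_simp
  rw [Real.rpow_div_two_eq_sqrt _ (by positivity), Real.rpow_natCast]
  have hPw : P = weightedPoly (p + 2) (fun i => (i + 2) / (i + 3)) := funext hP
  have hw1 : ∀ i : ℕ, ((i : ℝ) + 2) / (i + 3) ≤ 1 := fun i =>
    (div_le_one (by positivity)).2 (by linarith)
  have hw : Tendsto (fun n : ℕ => ((n : ℝ) + 2) / (n + 3)) atTop (𝓝 1) := by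
    simpa [add_comm] using tendsto_add_mul_div_add_mul_atTop_nhds (2 : ℝ) 3 1 one_ne_zero
  have hsum : r ^ 2 + β ^ 2 = 1 :=
    mul_left_cancel₀ (by positivity : (p + 1 : ℝ) ≠ 0) (by linear_combination hr2 + hβ2)
  have hunit (n : ℕ) : ‖u n‖ = 1 := by
    have h := norm_sq_smul_single_add_smul_single (Nat.succ_ne_zero n).symm r β
    rw [← hu n, hsum] at h
    exact (pow_eq_one_iff_of_nonneg (norm_nonneg _) two_ne_zero).1 h
  have hbound (x : ℓ²) (hx : ‖x‖ = 1) : |P x| ≤ 2 * r ^ p := hPw ▸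
    (abs_weightedPoly_le p (fun i => by positivity) hw1 hx).trans
      (add_two_mul_pow_sub_le hr hr2 (abs_nonneg _))
  have htendsto : Tendsto (fun n => |P (u n)|) atTop (𝓝 (2 * r ^ p)) := by
    simpa only [hPw, hu] using
      tendsto_abs_weightedPoly_smul_single_add_smul_single hw hr.le hsum hβ2
  have hfirst (n : ℕ) : u n 0 = r := by simp [hu, smul_single_add_smul_single_apply]
  refine ⟨hunit, lp.not_forall_tendsto_zero_of_apply_eq hr.ne' hfirst, ?_, htendsto⟩
  exact csSup_eq_of_forall_le_of_tendsto (by rintro _ ⟨x, hx, rfl⟩; exact hbound x hx)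
    (fun n => ⟨u n, hunit n, rfl⟩) htendsto
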